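/- For every m ∈ ℕ, the cumulative distribution function G_m of the sum of m independent Uniform(0,1) random variables satisfies, for all x not in {0,1,...,m}, that its m-th derivative equals G_m^{(m)}(x) = (-1)^{⌊x⌋}·C(m-1, ⌊x⌋), where C(m-1, ⌊x⌋) is the binomial coefficient (interpreted as 0 when ⌊x⌋ ∉ {0,...,m-1}). -/

import Mathlib

/-!
Write `G` for `irwinHallCDF`. Splitting off one coordinate of the cube gives
`G (n+1) x = ∫ s in x-1..x, G n s`. So `G (n+1)` is continuous, and
`G (n+1)' x = G n x - G n (x - 1) = -(Δ_[-1] (G n)) x` wherever `G n` is continuous at `x` and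
`x - 1`: everywhere for `n ≥ 1`, and off `{0, 1}` for the Heaviside step `G 0`. Iterating,
for `x ∉ {0,…,m}`, `G m⁽ᵐ⁾ x = (-1)^m (Δ_[-1]^[m] (G 0)) x = ∑_{k ≤ x} (-1)^k C(m,k)`,
a partial alternating sum of binomial coefficients, which equals `(-1)^⌊x⌋ C(m-1,⌊x⌋)`.
-/

open MeasureTheory

/-- The CDF of the Irwin–Hall distribution: the distribution of the sum of `m`
independent `Uniform(0,1)` random variables, realized on the unit cube with
Lebesgue measure. -/
noncomputable def irwinHallCDF (m : ℕ) (x : ℝ) : ℝ :=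
  (volume {y : Fin m → ℝ | (∀ i, y i ∈ Set.Icc (0 : ℝ) 1) ∧ ∑ i, y i ≤ x}).toReal

open Finset

def irwinHallSet (m : ℕ) (x : ℝ) : Set (Fin m → ℝ) :=
  {y | (∀ i, y i ∈ Set.Icc (0 : ℝ) 1) ∧ ∑ i, y i ≤ x}

lemma irwinHallCDF_eq_toReal_volume (m : ℕ) (x : ℝ) :
    irwinHallCDF m x = (volume (irwinHallSet m x)).toReal := rfl

lemma measurableSet_irwinHallSet (m : ℕ) (x : ℝ) : MeasurableSet (irwinHallSet m x) := by
  refine MeasurableSet.inter ?_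
    (measurableSet_le (measurable_sum _ fun i _ => measurable_pi_apply i) measurable_const)
  change MeasurableSet {y : Fin m → ℝ | ∀ i, y i ∈ Set.Icc (0 : ℝ) 1}
  rw [Set.ofPred_forall]
  exact MeasurableSet.iInter fun i => measurableSet_Icc.preimage (measurable_pi_apply i)

lemma volume_irwinHallSet_lt_top (m : ℕ) (x : ℝ) : volume (irwinHallSet m x) < ⊤ := by
  have hcube : irwinHallSet m x ⊆ Set.univ.pi fun _ => Set.Icc 0 1 := fun y hy i _ => hy.1 i
  refine (measure_mono hcube).trans_lt ?_
  simp [Real.volume_Icc_pi]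

lemma irwinHallSet_mono (m : ℕ) : Monotone (irwinHallSet m) :=
  fun _ _ hxy _ hy => ⟨hy.1, hy.2.trans hxy⟩

lemma monotone_irwinHallCDF (m : ℕ) : Monotone (irwinHallCDF m) := fun _ _ hxy =>
  ENNReal.toReal_mono (volume_irwinHallSet_lt_top m _).ne (measure_mono (irwinHallSet_mono m hxy))

lemma cons_mem_irwinHallSet {n : ℕ} {x t : ℝ} {z : Fin n → ℝ} :
    Fin.cons t z ∈ irwinHallSet (n + 1) x ↔
      t ∈ Set.Icc 0 1 ∧ z ∈ irwinHallSet n (x - t) := by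
  simp only [irwinHallSet, Set.mem_ofPred_eq, Fin.forall_fin_succ, Fin.sum_univ_succ,
    Fin.cons_zero, Fin.cons_succ, le_sub_iff_add_le', and_assoc]

lemma volume_irwinHallSet_succ (n : ℕ) (x : ℝ) :
    volume (irwinHallSet (n + 1) x) = ∫⁻ t in Set.Icc 0 1, volume (irwinHallSet n (x - t)) := by
  let e := MeasurableEquiv.piFinSuccAbove (fun _ : Fin (n + 1) => ℝ) 0
  have he : MeasurePreserving e.symm (volume.prod volume) volume :=
    (measurePreserving_piFinSuccAbove (fun _ => volume) 0).symm
  have hsection (t : ℝ) : Prod.mk t ⁻¹' (e.symm ⁻¹' irwinHallSet (n + 1) x) =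
      {z | t ∈ Set.Icc 0 1 ∧ z ∈ irwinHallSet n (x - t)} := by
    ext z
    simp only [Set.mem_preimage, e, MeasurableEquiv.piFinSuccAbove_symm_apply,
      Fin.insertNthEquiv_zero, Set.mem_ofPred_eq]
    exact cons_mem_irwinHallSet
  have hT := e.symm.measurableSet_preimage.2 (measurableSet_irwinHallSet (n + 1) x)
  rw [← he.measure_preimage_equiv, Measure.prod_apply hT,
    ← lintegral_indicator measurableSet_Icc]
  refine lintegral_congr fun t => ?_
  by_cases ht : t ∈ Set.Icc (0 : ℝ) 1 <;> simp [hsection, ht]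

lemma irwinHallCDF_succ (n : ℕ) (x : ℝ) :
    irwinHallCDF (n + 1) x = ∫ s in x - 1..x, irwinHallCDF n s := by
  have hanti : Antitone fun t => volume (irwinHallSet n (x - t)) :=
    fun _ _ hst => measure_mono (irwinHallSet_mono n (by linarith))
  rw [irwinHallCDF_eq_toReal_volume, volume_irwinHallSet_succ, ← integral_toReal
    hanti.measurable.aemeasurable (ae_of_all _ fun t => volume_irwinHallSet_lt_top n _),
    integral_Icc_eq_integral_Ioc, ← intervalIntegral.integral_of_le zero_le_one]
  have := intervalIntegral.integral_comp_sub_left (irwinHallCDF n) x (a := 0) (b := 1)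
  rwa [sub_zero] at this

lemma intervalIntegrable_irwinHallCDF (n : ℕ) (a b : ℝ) :
    IntervalIntegrable (irwinHallCDF n) volume a b :=
  (monotone_irwinHallCDF n).intervalIntegrable

lemma irwinHallCDF_succ_eq_sub (n : ℕ) (x : ℝ) :
    irwinHallCDF (n + 1) x =
      (∫ s in 0..x, irwinHallCDF n s) - ∫ s in 0..x - 1, irwinHallCDF n s := by
  rw [irwinHallCDF_succ, intervalIntegral.integral_interval_sub_left
    (intervalIntegrable_irwinHallCDF n _ _) (intervalIntegrable_irwinHallCDF n _ _)]

lemma continuous_irwinHallCDF_succ (n : ℕ) : Continuous (irwinHallCDF (n + 1)) := by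
  have hF := intervalIntegral.continuous_primitive (intervalIntegrable_irwinHallCDF n) 0
  rw [funext (irwinHallCDF_succ_eq_sub n)]
  exact hF.sub (hF.comp (continuous_sub_right 1))

lemma hasDerivAt_irwinHallCDF_succ {n : ℕ} {x : ℝ} (hx : ContinuousAt (irwinHallCDF n) x)
    (hx' : ContinuousAt (irwinHallCDF n) (x - 1)) :
    HasDerivAt (irwinHallCDF (n + 1)) (irwinHallCDF n x - irwinHallCDF n (x - 1)) x := by
  have hF {y : ℝ} (hy : ContinuousAt (irwinHallCDF n) y) :
      HasDerivAt (fun u => ∫ s in 0..u, irwinHallCDF n s) (irwinHallCDF n y) y :=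
    intervalIntegral.integral_hasDerivAt_right (intervalIntegrable_irwinHallCDF n _ _)
      (monotone_irwinHallCDF n).measurable.stronglyMeasurable.stronglyMeasurableAtFilter hy
  rw [funext (irwinHallCDF_succ_eq_sub n)]
  exact (hF hx).sub ((hF hx').comp_sub_const x 1)

lemma irwinHallCDF_zero (x : ℝ) : irwinHallCDF 0 x = if 0 ≤ x then 1 else 0 := by
  by_cases h : 0 ≤ x
  · have : irwinHallSet 0 x = Set.univ := by ext; simp [irwinHallSet, h]
    simp [irwinHallCDF_eq_toReal_volume, this, h, volume_pi]
  · have : irwinHallSet 0 x = ∅ := by ext; simp [irwinHallSet, h]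
    simp [irwinHallCDF_eq_toReal_volume, this, h]

lemma continuousAt_irwinHallCDF_zero {x : ℝ} (hx : x ≠ 0) :
    ContinuousAt (irwinHallCDF 0) x := by
  rcases hx.lt_or_gt with h | h
  · refine (continuousAt_const (y := (0 : ℝ))).congr ?_
    filter_upwards [eventually_lt_nhds h] with y hy
    simp [irwinHallCDF_zero, hy.not_ge]
  · refine (continuousAt_const (y := (1 : ℝ))).congr ?_
    filter_upwards [eventually_gt_nhds h] with y hy
    simp [irwinHallCDF_zero, hy.le]

open scoped fwdDiff

theorem HasDerivAt.fwdDiff_iter {𝕜 F : Type*} [NontriviallyNormedField 𝕜]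
    [NormedAddCommGroup F] [NormedSpace 𝕜 F] {f f' : 𝕜 → F} {h x : 𝕜} {n : ℕ}
    (hf : ∀ k ≤ n, HasDerivAt f (f' (x + k • h)) (x + k • h)) :
    HasDerivAt (Δ_[h] ^[n] f) (Δ_[h] ^[n] f' x) x := by
  rw [funext (fwdDiff_iter_eq_sum_shift h f n), fwdDiff_iter_eq_sum_shift]
  exact HasDerivAt.fun_sum fun k hk =>
    ((hf k (Nat.lt_succ_iff.mp (mem_range.mp hk))).comp_add_const x (k • h)).fun_const_smul _

lemma neg_one_smul_fwdDiff_neg_one (g : ℝ → ℝ) :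
    (-1 : ℝ) • Δ_[-1] g = fun x => g x - g (x - 1) := by
  ext x
  simp [fwdDiff, sub_eq_add_neg]

lemma iteratedDeriv_irwinHallCDF (n j : ℕ) :
    iteratedDeriv j (irwinHallCDF (n + 1 + j)) =
      (-1 : ℝ) ^ j • Δ_[-1] ^[j] (irwinHallCDF (n + 1)) := by
  induction j generalizing n with
  | zero => simp
  | succ j ih =>
    have hG := continuous_irwinHallCDF_succ n
    have hderiv (y : ℝ) : HasDerivAt (irwinHallCDF (n + 2))
        (((-1 : ℝ) • Δ_[-1] (irwinHallCDF (n + 1))) y) y := by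
      rw [neg_one_smul_fwdDiff_neg_one]
      exact hasDerivAt_irwinHallCDF_succ hG.continuousAt hG.continuousAt
    ext x
    rw [iteratedDeriv_succ, show n + 1 + (j + 1) = n + 1 + 1 + j by ring, ih (n + 1),
      ((HasDerivAt.fwdDiff_iter fun k _ => hderiv _).const_smul ((-1 : ℝ) ^ j)).deriv,
      fwdDiff_iter_const_smul, Function.iterate_succ_apply, pow_succ, mul_smul]
    rfl

lemma iteratedDeriv_irwinHallCDF_self {m : ℕ} (hm : 0 < m) {x : ℝ}
    (hx : ∀ k : ℕ, k ≤ m → x ≠ k) :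
    iteratedDeriv m (irwinHallCDF m) x = ((-1 : ℝ) ^ m • Δ_[-1] ^[m] (irwinHallCDF 0)) x := by
  obtain ⟨j, rfl⟩ : ∃ j, m = j + 1 := ⟨m - 1, by omega⟩
  have hiter := iteratedDeriv_irwinHallCDF 0 j
  rw [zero_add, add_comm 1 j] at hiter
  have hderiv (k : ℕ) (hk : k ≤ j) : HasDerivAt (irwinHallCDF 1)
      (((-1 : ℝ) • Δ_[-1] (irwinHallCDF 0)) (x + k • (-1))) (x + k • (-1)) := by
    rw [nsmul_eq_mul, mul_neg_one, ← sub_eq_add_neg, neg_one_smul_fwdDiff_neg_one]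
    refine hasDerivAt_irwinHallCDF_succ (continuousAt_irwinHallCDF_zero ?_)
      (continuousAt_irwinHallCDF_zero ?_)
    · exact sub_ne_zero.2 (hx k (by omega))
    · rw [sub_sub, sub_ne_zero]
      exact_mod_cast hx (k + 1) (by omega)
  rw [iteratedDeriv_succ, hiter,
    ((HasDerivAt.fwdDiff_iter hderiv).const_smul ((-1 : ℝ) ^ j)).deriv,
    fwdDiff_iter_const_smul, Function.iterate_succ_apply, pow_succ, mul_smul]
  rfl

lemma sum_filter_le_neg_one_pow_mul_choose {R : Type*} [CommRing R] {m : ℕ} (hm : 0 < m)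
    (J : ℕ) :
    ∑ k ∈ range (m + 1) with k ≤ J, (-1 : R) ^ k * m.choose k =
      (-1) ^ J * (m - 1).choose J := by
  obtain ⟨n, rfl⟩ : ∃ n, m = n + 1 := ⟨m - 1, by omega⟩
  calc ∑ k ∈ range (n + 1 + 1) with k ≤ J, (-1 : R) ^ k * (n + 1).choose k
      = ∑ k ∈ range (J + 1) with k ≤ n + 1, (-1 : R) ^ k * (n + 1).choose k := by
        congr 1; ext k; simp only [mem_filter, mem_range]; omega
    _ = ∑ k ∈ range (J + 1), (-1 : R) ^ k * (n + 1).choose k := by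
        refine sum_filter_of_ne fun k _ hk => ?_
        by_contra hlt
        simp [Nat.choose_eq_zero_of_lt (not_le.mp hlt)] at hk
    _ = (-1) ^ J * (n + 1 - 1).choose J := by
        rw [Nat.add_sub_cancel]
        exact_mod_cast congrArg (Int.cast : ℤ → R) Int.alternating_sum_range_choose_eq_choose

lemma neg_one_pow_mul_neg_one_pow_sub {R : Type*} [Monoid R] [HasDistribNeg R] {k m : ℕ}
    (hkm : k ≤ m) : (-1 : R) ^ m * (-1) ^ (m - k) = (-1) ^ k := by
  obtain ⟨d, rfl⟩ := Nat.exists_eq_add_of_le hkm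
  rw [Nat.add_sub_cancel_left, pow_add, mul_assoc, ← pow_add, Even.neg_one_pow ⟨d, rfl⟩,
    mul_one]

lemma neg_one_pow_smul_fwdDiff_iter_irwinHallCDF_zero {m : ℕ} (hm : 0 < m) (x : ℝ) :
    ((-1 : ℝ) ^ m • Δ_[-1] ^[m] (irwinHallCDF 0)) x =
      if 0 ≤ x then (-1) ^ ⌊x⌋₊ * ((m - 1).choose ⌊x⌋₊ : ℝ) else 0 := by
  have hterm (k : ℕ) (hk : k ∈ range (m + 1)) :
      (-1 : ℝ) ^ m * (((-1 : ℤ) ^ (m - k) * m.choose k) • irwinHallCDF 0 (x + k • (-1))) =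
        if (k : ℝ) ≤ x then (-1 : ℝ) ^ k * m.choose k else 0 := by
    have hsign := neg_one_pow_mul_neg_one_pow_sub (R := ℝ) (Nat.lt_succ_iff.mp (mem_range.mp hk))
    rw [irwinHallCDF_zero, zsmul_eq_mul, nsmul_eq_mul, mul_neg_one, ← sub_eq_add_neg]
    simp only [sub_nonneg]
    split_ifs
    · push_cast
      rw [mul_one, ← mul_assoc, hsign]
    · simp
  rw [Pi.smul_apply, fwdDiff_iter_eq_sum_shift, smul_eq_mul, mul_sum, sum_congr rfl hterm]
  split_ifs with hx
  · rw [← sum_filter, ← sum_filter_le_neg_one_pow_mul_choose hm]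
    exact sum_congr (filter_congr fun k _ => (Nat.le_floor_iff hx).symm) fun _ _ => rfl
  · exact sum_eq_zero fun k _ => if_neg fun hk => hx ((Nat.cast_nonneg k).trans hk)

theorem irwinHall_iteratedDeriv (m : ℕ) (hm : 0 < m) (x : ℝ)
    (hx : ∀ k : ℕ, k ≤ m → x ≠ (k : ℝ)) :
    iteratedDeriv m (irwinHallCDF m) x =
      if 0 ≤ ⌊x⌋ then (-1 : ℝ) ^ ⌊x⌋.toNat * ((m - 1).choose ⌊x⌋.toNat : ℝ)
      else 0 := by
  rw [iteratedDeriv_irwinHallCDF_self hm hx, neg_one_pow_smul_fwdDiff_iter_irwinHallCDF_zero hm,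
    Int.floor_toNat]
  simp only [Int.floor_nonneg]
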